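/- arXiv:2307.12908 — 3 statements merged into one kernel-verified Lean document; each statement's English description precedes it below -/
import Mathlib

section
/- Let G be a real Lie algebra with a direct sum decomposition G = C ⊕ S where C is contained in the center of G and S is a Lie subalgebra. Let H_k = C_k + S_k for k = 1,…,r with C_k ∈ C and S_k ∈ S. If the Lie subalgebra generated by {S_1,…,S_r} is perfect (equal to its own derived algebra), then the Lie subalgebra generated by {C_1+S_1,…,C_r+S_r} equals span{C_1,…,C_r} ⊕ Lie{S_1,…,S_r}. -/
/-- If G = C ⊕ S with C central and S a Lie subalgebra, H_k = C_k + S_k,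
and the Lie algebra generated by the S_k is perfect, then the Lie algebra generated by
the H_k equals span{C_k} ⊕ Lie{S_k}. -/
theorem stmt0 (G : Type*) [LieRing G] [LieAlgebra ℝ G]
    (C : Submodule ℝ G) (S : LieSubalgebra ℝ G)
    (hCcentral : ∀ c ∈ C, ∀ x : G, ⁅c, x⁆ = 0)
    (hsup : C ⊔ S.toSubmodule = ⊤) (hinf : C ⊓ S.toSubmodule = ⊥)
    (r : ℕ) (Ck Sk : Fin r → G) (hCk : ∀ k, Ck k ∈ C) (hSk : ∀ k, Sk k ∈ S)
    (hperfect : (LieSubalgebra.lieSpan ℝ G (Set.range Sk)).toSubmodule =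
      Submodule.span ℝ {z : G | ∃ x ∈ LieSubalgebra.lieSpan ℝ G (Set.range Sk),
        ∃ y ∈ LieSubalgebra.lieSpan ℝ G (Set.range Sk), z = ⁅x, y⁆}) :
    (LieSubalgebra.lieSpan ℝ G (Set.range fun k => Ck k + Sk k)).toSubmodule =
      Submodule.span ℝ (Set.range Ck) ⊔
        (LieSubalgebra.lieSpan ℝ G (Set.range Sk)).toSubmodule ∧
    Disjoint (Submodule.span ℝ (Set.range Ck))
        (LieSubalgebra.lieSpan ℝ G (Set.range Sk)).toSubmodule := by
  set L := LieSubalgebra.lieSpan ℝ G (Set.range Sk) with hLdef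
  set H := LieSubalgebra.lieSpan ℝ G (Set.range fun k => Ck k + Sk k) with hHdef
  have hC2 : ∀ c ∈ C, ∀ x : G, ⁅x, c⁆ = 0 := by
    intro c hc x
    rw [← lie_skew, hCcentral c hc x, neg_zero]
  -- brackets only depend on the class mod C
  have hbr : ∀ x u y v : G, x - u ∈ C → y - v ∈ C → ⁅x, y⁆ = ⁅u, v⁆ := by
    intro x u y v h1 h2
    have key : ⁅x, y⁆ - ⁅u, v⁆ = ⁅x - u, y⁆ + ⁅u, y - v⁆ := by
      rw [sub_lie, lie_sub]; abel
    rw [hCcentral _ h1 y, hC2 _ h2 u, add_zero] at key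
    exact sub_eq_zero.mp key
  -- the set of u admitting a lift x ∈ H with x - u ∈ C is a Lie subalgebra
  have hspanCk : Submodule.span ℝ (Set.range Ck) ≤ C := by
    rw [Submodule.span_le]
    rintro _ ⟨k, rfl⟩; exact hCk k
  let K : LieSubalgebra ℝ G :=
    { carrier := {u : G | ∃ x, x ∈ H ∧ x - u ∈ C}
      add_mem' := by
        rintro u v ⟨x, hx, hxu⟩ ⟨y, hy, hyv⟩
        refine ⟨x + y, H.add_mem hx hy, ?_⟩
        have : x + y - (u + v) = (x - u) + (y - v) := by abel
        rw [this]; exact C.add_mem hxu hyv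
      zero_mem' := ⟨0, H.zero_mem, by simp⟩
      smul_mem' := by
        rintro a u ⟨x, hx, hxu⟩
        refine ⟨a • x, H.smul_mem a hx, ?_⟩
        rw [← smul_sub]; exact C.smul_mem a hxu
      lie_mem' := by
        rintro u v ⟨x, hx, hxu⟩ ⟨y, hy, hyv⟩
        refine ⟨⁅x, y⁆, H.lie_mem hx hy, ?_⟩
        rw [hbr x u y v hxu hyv, sub_self]
        exact C.zero_mem }
  have hLK : L ≤ K := by
    rw [hLdef]
    apply LieSubalgebra.lieSpan_le.mpr
    rintro _ ⟨k, rfl⟩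
    exact ⟨Ck k + Sk k, LieSubalgebra.subset_lieSpan ⟨k, rfl⟩, by simpa using hCk k⟩
  -- L ⊆ H using perfectness
  have hLH : L.toSubmodule ≤ H.toSubmodule := by
    rw [hperfect]
    apply Submodule.span_le.mpr
    rintro z ⟨u, hu, v, hv, rfl⟩
    obtain ⟨x, hx, hxu⟩ := hLK hu
    obtain ⟨y, hy, hyv⟩ := hLK hv
    rw [← hbr x u y v hxu hyv]
    exact H.lie_mem hx hy
  have hSkH : ∀ k, Sk k ∈ H := fun k => hLH (LieSubalgebra.subset_lieSpan ⟨k, rfl⟩)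
  have hCkH : ∀ k, Ck k ∈ H.toSubmodule := by
    intro k
    have h1 : Ck k + Sk k ∈ H := LieSubalgebra.subset_lieSpan ⟨k, rfl⟩
    have := Submodule.sub_mem H.toSubmodule h1 (hSkH k)
    simpa using this
  -- span Ck ⊔ L is a Lie subalgebra
  let M : LieSubalgebra ℝ G :=
    { Submodule.span ℝ (Set.range Ck) ⊔ L.toSubmodule with
      lie_mem' := by
        intro x y hx hy
        obtain ⟨c, hc, s, hs, rfl⟩ := Submodule.mem_sup.mp hx
        obtain ⟨c', hc', s', hs', rfl⟩ := Submodule.mem_sup.mp hy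
        have : ⁅c + s, c' + s'⁆ = ⁅s, s'⁆ := by
          rw [add_lie, lie_add, lie_add, hCcentral c (hspanCk hc),
            hCcentral c (hspanCk hc), hC2 c' (hspanCk hc') s]
          abel
        rw [this]
        exact Submodule.mem_sup_right (L.lie_mem hs hs') }
  have hHM : H.toSubmodule ≤ M.toSubmodule := by
    have : H ≤ M := by
      apply LieSubalgebra.lieSpan_le.mpr
      rintro _ ⟨k, rfl⟩
      exact Submodule.add_mem _ (Submodule.mem_sup_left (Submodule.subset_span ⟨k, rfl⟩))
        (Submodule.mem_sup_right (LieSubalgebra.subset_lieSpan ⟨k, rfl⟩ : Sk k ∈ L))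
    exact this
  constructor
  · apply le_antisymm hHM
    apply sup_le _ hLH
    rw [Submodule.span_le]
    rintro _ ⟨k, rfl⟩
    exact hCkH k
  · have h1 : L.toSubmodule ≤ S.toSubmodule := by
      have : L ≤ S := LieSubalgebra.lieSpan_le.mpr (by rintro _ ⟨k, rfl⟩; exact hSk k)
      exact this
    exact Disjoint.mono hspanCk h1 (disjoint_iff.mpr hinf)
end

section
/- Let G = C ⊕ S be a real Lie algebra of skew-Hermitian matrices, where C is contained in the center of G and S is a semisimple Lie subalgebra, with C and S orthogonal for the Frobenius inner product. Let H_k = C_k + S_k (C_k ∈ C, S_k ∈ S) for k = 1,…,r, and let L = Lie{H_1,…,H_r}. Then the following are equivalent: (1) S ⊆ L; (2) Lie{S_1,…,S_r} = S; (3) L = span{C_1,…,C_r} ⊕ S. -/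
open scoped Matrix

attribute [local instance 100] LieRing.ofAssociativeRing

/-!
Since `C` is central, `⁅c + x, c' + y⁆ = ⁅x, y⁆` for `c, c' ∈ C` and `x, y ∈ C ⊕ S`.
Hence `span {C_k} ⊕ Lie{S_k}` and `C ⊕ L` are Lie subalgebras, which gives
`L ⊆ span {C_k} ⊕ Lie{S_k}` and `Lie{S_k} ⊆ C ⊕ L`. The first inclusion and `C ∩ S = 0`
give (1) ⇒ (2). For (2) ⇒ (1), a semisimple Lie algebra is spanned by its brackets, and a
bracket of two elements of `C ⊕ L` lies in `L`. Then (3) follows, since `C_k = H_k - S_k`.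
-/

lemma LieAlgebra.IsSemisimple.lie_top_top_eq_top (R L : Type*) [CommRing R] [LieRing L]
    [LieAlgebra R L] [LieAlgebra.IsSemisimple R L] :
    ⁅(⊤ : LieIdeal R L), (⊤ : LieIdeal R L)⁆ = ⊤ := by
  rw [eq_top_iff]
  nth_rw 1 [← LieAlgebra.IsSemisimple.sSup_atoms_eq_top (R := R) (L := L)]
  refine sSup_le fun I hI => ?_
  rw [← lie_eq_self_of_isAtom_of_nonabelian I hI
    (LieAlgebra.IsSemisimple.non_abelian_of_isAtom I hI)]
  exact LieSubmodule.mono_lie le_top le_top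

lemma LieSubalgebra.toSubmodule_le_of_forall_lie_mem {R M : Type*} [CommRing R] [LieRing M]
    [LieAlgebra R M] {S : LieSubalgebra R M} [LieAlgebra.IsSemisimple R S] {P : Submodule R M}
    (h : ∀ x ∈ S, ∀ y ∈ S, ⁅x, y⁆ ∈ P) : S.toSubmodule ≤ P := by
  intro s hs
  have hperfect : (⟨s, hs⟩ : S) ∈ ⁅(⊤ : LieIdeal R S), (⊤ : LieIdeal R S)⁆ := by
    rw [LieAlgebra.IsSemisimple.lie_top_top_eq_top]; trivial
  rw [← LieSubmodule.mem_toSubmodule, LieSubmodule.lieIdeal_oper_eq_linear_span'] at hperfect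
  have hbrackets : Submodule.span R {m : S | ∃ x ∈ (⊤ : LieIdeal R S), ∃ y ∈ (⊤ : LieIdeal R S),
      ⁅x, y⁆ = m} ≤ P.comap S.toSubmodule.subtype := by
    rw [Submodule.span_le]
    rintro _ ⟨x, -, y, -, rfl⟩
    exact h x x.2 y y.2
  exact hbrackets hperfect

def Submodule.LieCommute {R M : Type*} [CommRing R] [LieRing M] [LieAlgebra R M]
    (C N : Submodule R M) : Prop :=
  ∀ c ∈ C, ∀ x ∈ N, ⁅c, x⁆ = 0

section CentralSum

variable {R M : Type*} [CommRing R] [LieRing M] [LieAlgebra R M]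
  {C : Submodule R M} {S : LieSubalgebra R M}

lemma lie_add_add_eq_of_lieCommute (hC : C.LieCommute (C ⊔ S.toSubmodule))
    {c c' x y : M} (hc : c ∈ C) (hc' : c' ∈ C)
    (hx : x ∈ C ⊔ S.toSubmodule) (hy : y ∈ C ⊔ S.toSubmodule) :
    ⁅c + x, c' + y⁆ = ⁅x, y⁆ := by
  have hcy : ⁅c, c' + y⁆ = 0 := hC c hc _ (add_mem (Submodule.mem_sup_left hc') hy)
  have hxc : ⁅x, c'⁆ = 0 := by rw [← lie_skew, hC c' hc' x hx, neg_zero]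
  rw [add_lie, hcy, zero_add, lie_add, hxc, zero_add]

lemma lie_mem_of_mem_sup_of_lieCommute (hC : C.LieCommute (C ⊔ S.toSubmodule))
    {D : Submodule R M} (hD : D ≤ C) {K : LieSubalgebra R M}
    (hK : K.toSubmodule ≤ C ⊔ S.toSubmodule) {x y : M}
    (hx : x ∈ D ⊔ K.toSubmodule) (hy : y ∈ D ⊔ K.toSubmodule) : ⁅x, y⁆ ∈ K := by
  obtain ⟨d, hd, k, hk, rfl⟩ := Submodule.mem_sup.mp hx
  obtain ⟨d', hd', k', hk', rfl⟩ := Submodule.mem_sup.mp hy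
  rw [lie_add_add_eq_of_lieCommute hC (hD hd) (hD hd') (hK hk) (hK hk')]
  exact K.lie_mem hk hk'

def LieSubalgebra.supOfLieCommute (hC : C.LieCommute (C ⊔ S.toSubmodule))
    {D : Submodule R M} (hD : D ≤ C) {K : LieSubalgebra R M}
    (hK : K.toSubmodule ≤ C ⊔ S.toSubmodule) : LieSubalgebra R M where
  toSubmodule := D ⊔ K.toSubmodule
  lie_mem' hx hy := Submodule.mem_sup_right (lie_mem_of_mem_sup_of_lieCommute hC hD hK hx hy)

variable {ι : Type*} {c s : ι → M}

lemma span_range_le_of_forall_mem (hc : ∀ k, c k ∈ C) : Submodule.span R (Set.range c) ≤ C :=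
  Submodule.span_le.mpr (Set.range_subset_iff.mpr hc)

lemma lieSpan_range_le_of_forall_mem (hs : ∀ k, s k ∈ S) :
    LieSubalgebra.lieSpan R M (Set.range s) ≤ S :=
  LieSubalgebra.lieSpan_le.mpr (Set.range_subset_iff.mpr hs)

lemma lieSpan_add_le_span_sup_lieSpan
    (hC : C.LieCommute (C ⊔ S.toSubmodule))
    (hc : ∀ k, c k ∈ C) (hs : ∀ k, s k ∈ S) :
    (LieSubalgebra.lieSpan R M (Set.range fun k => c k + s k)).toSubmodule ≤
      Submodule.span R (Set.range c) ⊔ (LieSubalgebra.lieSpan R M (Set.range s)).toSubmodule := by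
  refine LieSubalgebra.lieSpan_le (K := LieSubalgebra.supOfLieCommute hC
    (span_range_le_of_forall_mem hc)
    (le_sup_of_le_right (lieSpan_range_le_of_forall_mem hs))) |>.mpr ?_
  rintro _ ⟨k, rfl⟩
  exact Submodule.add_mem_sup (Submodule.subset_span ⟨k, rfl⟩)
    (LieSubalgebra.subset_lieSpan ⟨k, rfl⟩)

lemma lieSpan_add_le_sup (hC : C.LieCommute (C ⊔ S.toSubmodule))
    (hc : ∀ k, c k ∈ C) (hs : ∀ k, s k ∈ S) :
    (LieSubalgebra.lieSpan R M (Set.range fun k => c k + s k)).toSubmodule ≤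
      C ⊔ S.toSubmodule :=
  (lieSpan_add_le_span_sup_lieSpan hC hc hs).trans <|
    sup_le_sup (span_range_le_of_forall_mem hc) (lieSpan_range_le_of_forall_mem hs)

lemma lieSpan_le_sup_lieSpan_add (hC : C.LieCommute (C ⊔ S.toSubmodule))
    (hc : ∀ k, c k ∈ C) (hs : ∀ k, s k ∈ S) :
    (LieSubalgebra.lieSpan R M (Set.range s)).toSubmodule ≤
      C ⊔ (LieSubalgebra.lieSpan R M (Set.range fun k => c k + s k)).toSubmodule := by
  refine LieSubalgebra.lieSpan_le (K := LieSubalgebra.supOfLieCommute hC le_rfl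
    (lieSpan_add_le_sup hC hc hs)) |>.mpr ?_
  rintro _ ⟨k, rfl⟩
  rw [← neg_add_cancel_left (c k) (s k)]
  exact Submodule.add_mem_sup (neg_mem (hc k)) (LieSubalgebra.subset_lieSpan ⟨k, rfl⟩)

lemma toSubmodule_le_lieSpan_add_of_lieSpan_eq [LieAlgebra.IsSemisimple R S]
    (hC : C.LieCommute (C ⊔ S.toSubmodule))
    (hc : ∀ k, c k ∈ C) (hs : ∀ k, s k ∈ S)
    (h : LieSubalgebra.lieSpan R M (Set.range s) = S) :
    S.toSubmodule ≤ (LieSubalgebra.lieSpan R M (Set.range fun k => c k + s k)).toSubmodule := by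
  have hS := lieSpan_le_sup_lieSpan_add hC hc hs
  rw [h] at hS
  exact LieSubalgebra.toSubmodule_le_of_forall_lie_mem fun x hx y hy =>
    lie_mem_of_mem_sup_of_lieCommute hC le_rfl (lieSpan_add_le_sup hC hc hs) (hS hx) (hS hy)

lemma lieSpan_eq_of_toSubmodule_le_lieSpan_add
    (hC : C.LieCommute (C ⊔ S.toSubmodule)) (hCS : C ⊓ S.toSubmodule = ⊥)
    (hc : ∀ k, c k ∈ C) (hs : ∀ k, s k ∈ S)
    (h : S.toSubmodule ≤ (LieSubalgebra.lieSpan R M (Set.range fun k => c k + s k)).toSubmodule) :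
    LieSubalgebra.lieSpan R M (Set.range s) = S := by
  refine le_antisymm (lieSpan_range_le_of_forall_mem hs) ?_
  rw [← LieSubalgebra.toSubmodule_le_toSubmodule]
  have hS := (h.trans (lieSpan_add_le_span_sup_lieSpan hC hc hs)).trans_eq
    (sup_comm _ _)
  rw [← inf_eq_right.mpr hS, sup_inf_assoc_of_le _
    ((LieSubalgebra.toSubmodule_le_toSubmodule _ _).mpr (lieSpan_range_le_of_forall_mem hs))]
  have hbot : Submodule.span R (Set.range c) ⊓ S.toSubmodule = ⊥ :=
    eq_bot_iff.mpr (hCS ▸ inf_le_inf_right _ (span_range_le_of_forall_mem hc))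
  rw [hbot, sup_bot_eq]

lemma lieSpan_add_eq_span_sup_of_lieSpan_eq [LieAlgebra.IsSemisimple R S]
    (hC : C.LieCommute (C ⊔ S.toSubmodule))
    (hc : ∀ k, c k ∈ C) (hs : ∀ k, s k ∈ S)
    (h : LieSubalgebra.lieSpan R M (Set.range s) = S) :
    (LieSubalgebra.lieSpan R M (Set.range fun k => c k + s k)).toSubmodule =
      Submodule.span R (Set.range c) ⊔ S.toSubmodule := by
  have hSL := toSubmodule_le_lieSpan_add_of_lieSpan_eq hC hc hs h
  refine le_antisymm (h ▸ lieSpan_add_le_span_sup_lieSpan hC hc hs) (sup_le ?_ hSL)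
  refine Submodule.span_le.mpr (Set.range_subset_iff.mpr fun k => ?_)
  rw [← add_sub_cancel_right (c k) (s k)]
  exact sub_mem (LieSubalgebra.subset_lieSpan ⟨k, rfl⟩) (hSL (hs k))

end CentralSum

theorem stmt1_general (N : ℕ)
    (C : Submodule ℝ (Matrix (Fin N) (Fin N) ℂ))
    (S : LieSubalgebra ℝ (Matrix (Fin N) (Fin N) ℂ))
    (hCcentral : ∀ c ∈ C, ∀ x, x ∈ C ⊔ S.toSubmodule → ⁅c, x⁆ = 0)
    (hinf : C ⊓ S.toSubmodule = ⊥)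
    (hss : LieAlgebra.IsSemisimple ℝ ↥S)
    (r : ℕ) (Ck Sk : Fin r → Matrix (Fin N) (Fin N) ℂ)
    (hCk : ∀ k, Ck k ∈ C) (hSk : ∀ k, Sk k ∈ S) :
    ((S.toSubmodule ≤
        (LieSubalgebra.lieSpan ℝ (Matrix (Fin N) (Fin N) ℂ)
          (Set.range fun k => Ck k + Sk k)).toSubmodule) ↔
      (LieSubalgebra.lieSpan ℝ (Matrix (Fin N) (Fin N) ℂ) (Set.range Sk) = S)) ∧
    ((LieSubalgebra.lieSpan ℝ (Matrix (Fin N) (Fin N) ℂ) (Set.range Sk) = S) ↔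
      ((LieSubalgebra.lieSpan ℝ (Matrix (Fin N) (Fin N) ℂ)
          (Set.range fun k => Ck k + Sk k)).toSubmodule =
        Submodule.span ℝ (Set.range Ck) ⊔ S.toSubmodule)) := by
  have h12 := lieSpan_eq_of_toSubmodule_le_lieSpan_add hCcentral hinf hCk hSk
  refine ⟨⟨h12, toSubmodule_le_lieSpan_add_of_lieSpan_eq hCcentral hCk hSk⟩,
    ⟨lieSpan_add_eq_span_sup_of_lieSpan_eq hCcentral hCk hSk,
      fun h3 => h12 (h3 ▸ le_sup_right)⟩⟩

/-- For a Lie algebra G = C ⊕ S of skew-Hermitian matrices with C central,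
S semisimple, C ⊥ S for the Frobenius inner product, and generators H_k = C_k + S_k,
the three conditions (1) S ⊆ L, (2) Lie{S_k} = S, (3) L = span{C_k} ⊕ S are equivalent. -/
theorem stmt1 (N : ℕ)
    (C : Submodule ℝ (Matrix (Fin N) (Fin N) ℂ))
    (S : LieSubalgebra ℝ (Matrix (Fin N) (Fin N) ℂ))
    (hskew : ∀ A : Matrix (Fin N) (Fin N) ℂ,
      (A ∈ C ∨ A ∈ S) → Aᴴ = -A)
    (hCcentral : ∀ c ∈ C, ∀ x, x ∈ C ⊔ S.toSubmodule → ⁅c, x⁆ = 0)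
    (hinf : C ⊓ S.toSubmodule = ⊥)
    (horth : ∀ c ∈ C, ∀ s ∈ S, (c * sᴴ).trace = 0)
    (hss : LieAlgebra.IsSemisimple ℝ ↥S)
    (r : ℕ) (Ck Sk : Fin r → Matrix (Fin N) (Fin N) ℂ)
    (hCk : ∀ k, Ck k ∈ C) (hSk : ∀ k, Sk k ∈ S) :
    ((S.toSubmodule ≤
        (LieSubalgebra.lieSpan ℝ (Matrix (Fin N) (Fin N) ℂ)
          (Set.range fun k => Ck k + Sk k)).toSubmodule) ↔
      (LieSubalgebra.lieSpan ℝ (Matrix (Fin N) (Fin N) ℂ) (Set.range Sk) = S)) ∧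
    ((LieSubalgebra.lieSpan ℝ (Matrix (Fin N) (Fin N) ℂ) (Set.range Sk) = S) ↔
      ((LieSubalgebra.lieSpan ℝ (Matrix (Fin N) (Fin N) ℂ)
          (Set.range fun k => Ck k + Sk k)).toSubmodule =
        Submodule.span ℝ (Set.range Ck) ⊔ S.toSubmodule)) :=
  stmt1_general N C S hCcentral hinf hss r Ck Sk hCk hSk
end

section
/- Let n_1, n_2 ≥ 1 with n_1 + n_2 ≥ 3. Let L be the real Lie subalgebra of su(n_1 + n_2) generated by: (a) all block-diagonal matrices diag(A, B) with A ∈ su(n_1), B ∈ su(n_2), and (b) one matrix X_{j,m} which is zero everywhere except for entries i in positions (j,m) and (m,j), for some fixed 1 ≤ j ≤ n_1 and n_1 + 1 ≤ m ≤ n_1 + n_2. Then L = su(n_1 + n_2). -/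
open scoped Matrix

attribute [local instance] LieRing.ofAssociativeRing

/-! Let `𝔨 = su(n₁) ⊕ su(n₂)` be the block-diagonal part. The off-diagonal skew-Hermitian matrices
`[[0, C], [-Cᴴ, 0]]` form a `𝔨`-module, `diag(P, Q)` acting by `C ↦ P C - C Q`. Real rotations
`E_ab - E_ba` inside the blocks move `C = i E_jm` to `i E_ab` for every position `(a, b)`, and
since one block has a second index `k`, the diagonal element `i (E_kk - E_aa)` (or its analogue in
the second block) turns `i E_ab` into `E_ab`; so `L` contains the whole off-diagonal part. The
only direction of `su(n₁ + n₂)` still missing is a block-diagonal `diag(A, B)` with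
`tr A = -tr B = c ≠ 0`; it is corrected by the bracket of the off-diagonal elements `E_jm` and
`(c / 2) E_jm`, which equals `diag(c E_jj, -c E_mm)`. -/

open Matrix Complex

namespace LieAlgebra.SpecialUnitary

section su

variable (n : Type*) [Fintype n] [DecidableEq n]

def su : LieSubalgebra ℝ (Matrix n n ℂ) where
  carrier := {M | Mᴴ = -M ∧ M.trace = 0}
  add_mem' {A B} hA hB := ⟨by rw [conjTranspose_add, hA.1, hB.1, neg_add], by
    rw [trace_add, hA.2, hB.2, add_zero]⟩
  zero_mem' := by simp
  smul_mem' r A hA := ⟨by rw [conjTranspose_smul, hA.1, star_trivial, smul_neg], by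
    rw [trace_smul, hA.2, smul_zero]⟩
  lie_mem' {A B} hA hB := ⟨by
    rw [Ring.lie_def, conjTranspose_sub, conjTranspose_mul, conjTranspose_mul, hA.1, hB.1]
    noncomm_ring, matrix_trace_commutator_zero n ℂ A B⟩

variable {n}

theorem mem_su {M : Matrix n n ℂ} : M ∈ su n ↔ Mᴴ = -M ∧ M.trace = 0 := Iff.rfl

theorem single_sub_single_mem_su (a b : n) : single a b 1 - single b a 1 ∈ su n := by
  refine ⟨by simp, ?_⟩
  by_cases h : a = b
  · simp [h]
  · simp [trace_sub, trace_single_eq_of_ne _ _ _ h, trace_single_eq_of_ne _ _ _ (Ne.symm h)]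

theorem single_I_sub_single_I_mem_su (a b : n) :
    single a a I - single b b I ∈ su n :=
  ⟨by simp [← Matrix.single_neg]; abel, by simp [trace_sub]⟩

end su

section Blocks

variable {ι κ : Type*} [Fintype ι] [Fintype κ] [DecidableEq ι] [DecidableEq κ]

omit [DecidableEq ι] [DecidableEq κ] in
theorem trace_fromBlocks {α : Type*} [AddCommMonoid α] (A : Matrix ι ι α) (B : Matrix ι κ α)
    (C : Matrix κ ι α) (D : Matrix κ κ α) : (fromBlocks A B C D).trace = A.trace + D.trace := by
  simp [trace, Fintype.sum_sum_type]

theorem fromBlocks_mem_su_iff {A : Matrix ι ι ℂ} {B : Matrix κ κ ℂ} :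
    fromBlocks A 0 0 B ∈ su (ι ⊕ κ) ↔ Aᴴ = -A ∧ Bᴴ = -B ∧ A.trace + B.trace = 0 := by
  simp [mem_su, fromBlocks_conjTranspose, fromBlocks_neg, fromBlocks_inj, trace_fromBlocks,
    and_assoc]

variable (ι κ) in
def skewOffDiag : Matrix ι κ ℂ →ₗ[ℝ] Matrix (ι ⊕ κ) (ι ⊕ κ) ℂ where
  toFun C := fromBlocks 0 C (-Cᴴ) 0
  map_add' C D := by simp [fromBlocks_add, add_comm]
  map_smul' r C := by simp [fromBlocks_smul]

omit [Fintype ι] [Fintype κ] [DecidableEq ι] [DecidableEq κ] in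
theorem skewOffDiag_apply (C : Matrix ι κ ℂ) : skewOffDiag ι κ C = fromBlocks 0 C (-Cᴴ) 0 := rfl

omit [Fintype ι] [Fintype κ] in
theorem of_ite_eq_skewOffDiag_single (j : ι) (m : κ) :
    (of fun a b => if (a = Sum.inl j ∧ b = Sum.inr m) ∨ (a = Sum.inr m ∧ b = Sum.inl j)
      then I else 0 : Matrix (ι ⊕ κ) (ι ⊕ κ) ℂ) = skewOffDiag ι κ (single j m I) := by
  ext (a | a) (b | b) <;> simp [skewOffDiag_apply, single, eq_comm, and_comm, apply_ite]

theorem skewOffDiag_mem_su (C : Matrix ι κ ℂ) : skewOffDiag ι κ C ∈ su (ι ⊕ κ) :=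
  ⟨by simp [skewOffDiag_apply, fromBlocks_conjTranspose, fromBlocks_neg],
    by simp [skewOffDiag_apply, trace_fromBlocks]⟩

theorem lie_fromBlocks_skewOffDiag {P : Matrix ι ι ℂ} {Q : Matrix κ κ ℂ} (hP : Pᴴ = -P)
    (hQ : Qᴴ = -Q) (C : Matrix ι κ ℂ) :
    ⁅fromBlocks P 0 0 Q, skewOffDiag ι κ C⁆ = skewOffDiag ι κ (P * C - C * Q) := by
  simp only [skewOffDiag_apply, Ring.lie_def, fromBlocks_multiply, sub_eq_add_neg,
    fromBlocks_neg, fromBlocks_add, conjTranspose_add, conjTranspose_neg, conjTranspose_mul, hP, hQ,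
    Matrix.mul_zero, Matrix.zero_mul, add_zero, zero_add, neg_zero, Matrix.mul_neg, Matrix.neg_mul,
    neg_neg]
  congr 1; abel

theorem lie_skewOffDiag_skewOffDiag (C D : Matrix ι κ ℂ) :
    ⁅skewOffDiag ι κ C, skewOffDiag ι κ D⁆ =
      fromBlocks (D * Cᴴ - C * Dᴴ) 0 0 (Dᴴ * C - Cᴴ * D) := by
  simp only [skewOffDiag_apply, Ring.lie_def, fromBlocks_multiply, sub_eq_add_neg,
    fromBlocks_neg, fromBlocks_add, Matrix.mul_zero, Matrix.zero_mul, add_zero, zero_add, neg_zero,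
    Matrix.mul_neg, Matrix.neg_mul, neg_neg]
  congr 1 <;> abel

omit [Fintype ι] [Fintype κ] [DecidableEq ι] [DecidableEq κ] in
theorem fromBlocks_add_skewOffDiag_toBlocks {M : Matrix (ι ⊕ κ) (ι ⊕ κ) ℂ} (hM : Mᴴ = -M) :
    fromBlocks M.toBlocks₁₁ 0 0 M.toBlocks₂₂ + skewOffDiag ι κ M.toBlocks₁₂ = M := by
  rw [← fromBlocks_toBlocks M, fromBlocks_conjTranspose, fromBlocks_neg, fromBlocks_inj] at hM
  have h₂₁ : -M.toBlocks₁₂ᴴ = M.toBlocks₂₁ := by rw [hM.2.2.1, neg_neg]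
  rw [skewOffDiag_apply, fromBlocks_add, add_zero, zero_add, zero_add, add_zero, h₂₁,
    fromBlocks_toBlocks]

end Blocks

section Generation

variable {ι κ : Type*} [Fintype ι] [Fintype κ] [DecidableEq ι] [DecidableEq κ]
  {K : LieSubalgebra ℝ (Matrix (ι ⊕ κ) (ι ⊕ κ) ℂ)}

theorem skewOffDiag_mul_sub_mul_mem (hblock : ∀ A ∈ su ι, ∀ B ∈ su κ, fromBlocks A 0 0 B ∈ K)
    {C : Matrix ι κ ℂ} (hC : skewOffDiag ι κ C ∈ K) {P : Matrix ι ι ℂ} (hP : P ∈ su ι)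
    {Q : Matrix κ κ ℂ} (hQ : Q ∈ su κ) : skewOffDiag ι κ (P * C - C * Q) ∈ K := by
  rw [← lie_fromBlocks_skewOffDiag hP.1 hQ.1]
  exact K.lie_mem (hblock P hP Q hQ) hC

theorem skewOffDiag_single_I_mem (hblock : ∀ A ∈ su ι, ∀ B ∈ su κ, fromBlocks A 0 0 B ∈ K)
    {j : ι} {m : κ} (hX : skewOffDiag ι κ (single j m I) ∈ K) (a : ι) (b : κ) :
    skewOffDiag ι κ (single a b I) ∈ K := by
  have hrow : ∀ a, skewOffDiag ι κ (single a m I) ∈ K := by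
    intro a
    obtain rfl | ha := eq_or_ne a j
    · exact hX
    · simpa [Matrix.sub_mul, Matrix.single_mul_single_of_ne _ _ _ _ ha] using
        skewOffDiag_mul_sub_mul_mem hblock hX (single_sub_single_mem_su a j) (zero_mem _)
  obtain rfl | hb := eq_or_ne b m
  · exact hrow a
  · simpa [Matrix.mul_sub, Matrix.single_mul_single_of_ne _ _ _ _ hb.symm] using
      skewOffDiag_mul_sub_mul_mem hblock (hrow a) (zero_mem _) (single_sub_single_mem_su b m)

theorem skewOffDiag_single_one_mem (hblock : ∀ A ∈ su ι, ∀ B ∈ su κ, fromBlocks A 0 0 B ∈ K)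
    {j : ι} {m : κ} (hX : skewOffDiag ι κ (single j m I) ∈ K) (hn : Nontrivial ι ∨ Nontrivial κ)
    (a : ι) (b : κ) : skewOffDiag ι κ (single a b 1) ∈ K := by
  have hab := skewOffDiag_single_I_mem hblock hX a b
  have hone : single a b (1 : ℂ) = -single a b (I * I) := by ext; simp [single, neg_ite]
  rcases hn with hn | hn
  · obtain ⟨k, hk⟩ := exists_ne a
    convert skewOffDiag_mul_sub_mul_mem hblock hab (single_I_sub_single_I_mem_su k a)
      (zero_mem _) using 2
    rw [hone, Matrix.sub_mul, Matrix.single_mul_single_of_ne _ _ _ _ hk, single_mul_single_same,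
      Matrix.mul_zero, sub_zero, zero_sub]
  · obtain ⟨k, hk⟩ := exists_ne b
    convert skewOffDiag_mul_sub_mul_mem hblock hab (zero_mem _)
      (single_I_sub_single_I_mem_su b k) using 2
    rw [hone, Matrix.mul_sub, Matrix.single_mul_single_of_ne _ _ _ _ hk.symm,
      single_mul_single_same, Matrix.zero_mul, zero_sub, sub_zero]

omit [Fintype ι] [Fintype κ] in
theorem single_eq_re_smul_add_im_smul (a : ι) (b : κ) (z : ℂ) :
    single a b z = z.re • single a b 1 + z.im • single a b I := by
  rw [smul_single, smul_single, ← single_add]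
  simp

theorem skewOffDiag_mem (hblock : ∀ A ∈ su ι, ∀ B ∈ su κ, fromBlocks A 0 0 B ∈ K)
    {j : ι} {m : κ} (hX : skewOffDiag ι κ (single j m I) ∈ K) (hn : Nontrivial ι ∨ Nontrivial κ)
    (C : Matrix ι κ ℂ) : skewOffDiag ι κ C ∈ K := by
  rw [matrix_eq_sum_single C, map_sum]
  refine sum_mem fun a _ => ?_
  rw [map_sum]
  refine sum_mem fun b _ => ?_
  rw [single_eq_re_smul_add_im_smul, map_add, map_smul, map_smul]
  exact add_mem (K.smul_mem _ (skewOffDiag_single_one_mem hblock hX hn a b))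
    (K.smul_mem _ (skewOffDiag_single_I_mem hblock hX a b))

theorem fromBlocks_mem_of_mem_su (hblock : ∀ A ∈ su ι, ∀ B ∈ su κ, fromBlocks A 0 0 B ∈ K)
    {j : ι} {m : κ} (hX : skewOffDiag ι κ (single j m I) ∈ K) (hn : Nontrivial ι ∨ Nontrivial κ)
    {A : Matrix ι ι ℂ} {B : Matrix κ κ ℂ} (hAB : fromBlocks A 0 0 B ∈ su (ι ⊕ κ)) :
    fromBlocks A 0 0 B ∈ K := by
  obtain ⟨hA, hB, htr⟩ := fromBlocks_mem_su_iff.mp hAB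
  set c := A.trace
  have hc : star c = -c := by rw [← trace_conjTranspose, hA, trace_neg]
  have hcorr : fromBlocks (c • single j j 1) 0 0 (-(c • single m m 1)) =
      ⁅skewOffDiag ι κ (single j m 1), skewOffDiag ι κ ((c / 2) • single j m 1)⁆ := by
    rw [lie_skewOffDiag_skewOffDiag]
    have hc₂ : star (c / 2) = -(c / 2) := by rw [star_div₀, hc, star_ofNat, neg_div]
    simp only [conjTranspose_smul, conjTranspose_single, star_one, Matrix.smul_mul,
      Matrix.mul_smul, single_mul_single_same, mul_one, hc₂]
    congr 1 <;> module
  have hsplit : fromBlocks A 0 0 B = fromBlocks (A - c • single j j 1) 0 0 (B + c • single m m 1) +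
      fromBlocks (c • single j j 1) 0 0 (-(c • single m m 1)) := by
    rw [fromBlocks_add]; simp
  rw [hsplit]
  refine add_mem (hblock _ ⟨?_, ?_⟩ _ ⟨?_, ?_⟩) (hcorr ▸ K.lie_mem (skewOffDiag_mem hblock hX hn _)
    (skewOffDiag_mem hblock hX hn _))
  · rw [conjTranspose_sub, conjTranspose_smul, conjTranspose_single, hA, hc, star_one, neg_smul]
    abel
  · simp [trace_sub, c]
  · rw [conjTranspose_add, conjTranspose_smul, conjTranspose_single, hB, hc, star_one, neg_smul]
    abel
  · simp [trace_add]; linear_combination htr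

theorem su_le_of_fromBlocks_mem (hblock : ∀ A ∈ su ι, ∀ B ∈ su κ, fromBlocks A 0 0 B ∈ K)
    {j : ι} {m : κ} (hX : skewOffDiag ι κ (single j m I) ∈ K)
    (hn : Nontrivial ι ∨ Nontrivial κ) : su (ι ⊕ κ) ≤ K := by
  intro M hM
  have hdecomp := fromBlocks_add_skewOffDiag_toBlocks hM.1
  have hdiag : fromBlocks M.toBlocks₁₁ 0 0 M.toBlocks₂₂ ∈ su (ι ⊕ κ) := by
    rw [eq_sub_of_add_eq hdecomp]
    exact sub_mem hM (skewOffDiag_mem_su _)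
  rw [← hdecomp]
  exact add_mem (fromBlocks_mem_of_mem_su hblock hX hn hdiag) (skewOffDiag_mem hblock hX hn _)

end Generation

end LieAlgebra.SpecialUnitary

open LieAlgebra.SpecialUnitary

theorem stmt12_general (n₁ n₂ : ℕ) (h₃ : 3 ≤ n₁ + n₂)
    (j : Fin n₁) (m : Fin n₂) :
    (LieSubalgebra.lieSpan ℝ (Matrix (Fin n₁ ⊕ Fin n₂) (Fin n₁ ⊕ Fin n₂) ℂ)
        ({M | ∃ (A : Matrix (Fin n₁) (Fin n₁) ℂ) (B : Matrix (Fin n₂) (Fin n₂) ℂ),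
            Aᴴ = -A ∧ A.trace = 0 ∧ Bᴴ = -B ∧ B.trace = 0 ∧
            M = Matrix.fromBlocks A 0 0 B} ∪
          {Matrix.of fun a b =>
            if (a = Sum.inl j ∧ b = Sum.inr m) ∨ (a = Sum.inr m ∧ b = Sum.inl j)
            then Complex.I else 0}) : Set (Matrix (Fin n₁ ⊕ Fin n₂) (Fin n₁ ⊕ Fin n₂) ℂ)) =
      {M : Matrix (Fin n₁ ⊕ Fin n₂) (Fin n₁ ⊕ Fin n₂) ℂ | Mᴴ = -M ∧ M.trace = 0} := by
  have hn : Nontrivial (Fin n₁) ∨ Nontrivial (Fin n₂) := by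
    simp only [Fin.nontrivial_iff_two_le]
    have := j.pos
    have := m.pos
    omega
  have hX := of_ite_eq_skewOffDiag_single j m
  refine congrArg SetLike.coe (le_antisymm (b := su (Fin n₁ ⊕ Fin n₂))
    (LieSubalgebra.lieSpan_le.mpr ?_) (su_le_of_fromBlocks_mem (j := j) (m := m) ?_ ?_ hn))
  · rintro M (⟨A, B, hA, htA, hB, htB, rfl⟩ | rfl)
    · exact fromBlocks_mem_su_iff.mpr ⟨hA, hB, by rw [htA, htB, add_zero]⟩
    · rw [hX]
      exact skewOffDiag_mem_su _
  · exact fun A hA B hB =>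
      LieSubalgebra.subset_lieSpan (Or.inl ⟨A, B, hA.1, hA.2, hB.1, hB.2, rfl⟩)
  · rw [← hX]
    exact LieSubalgebra.subset_lieSpan (Or.inr rfl)

/-- the real Lie algebra generated inside su(n₁+n₂) by all block-diagonal
matrices diag(A,B) with A ∈ su(n₁), B ∈ su(n₂), together with a single off-diagonal
matrix X_{j,m} (with entries i at positions (j,m) and (m,j), j in the first block and m
in the second), is all of su(n₁+n₂), provided n₁, n₂ ≥ 1 and n₁ + n₂ ≥ 3. -/
theorem stmt12 (n₁ n₂ : ℕ) (h₁ : 1 ≤ n₁) (h₂ : 1 ≤ n₂) (h₃ : 3 ≤ n₁ + n₂)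
    (j : Fin n₁) (m : Fin n₂) :
    (LieSubalgebra.lieSpan ℝ (Matrix (Fin n₁ ⊕ Fin n₂) (Fin n₁ ⊕ Fin n₂) ℂ)
        ({M | ∃ (A : Matrix (Fin n₁) (Fin n₁) ℂ) (B : Matrix (Fin n₂) (Fin n₂) ℂ),
            Aᴴ = -A ∧ A.trace = 0 ∧ Bᴴ = -B ∧ B.trace = 0 ∧
            M = Matrix.fromBlocks A 0 0 B} ∪
          {Matrix.of fun a b =>
            if (a = Sum.inl j ∧ b = Sum.inr m) ∨ (a = Sum.inr m ∧ b = Sum.inl j)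
            then Complex.I else 0}) : Set (Matrix (Fin n₁ ⊕ Fin n₂) (Fin n₁ ⊕ Fin n₂) ℂ)) =
      {M : Matrix (Fin n₁ ⊕ Fin n₂) (Fin n₁ ⊕ Fin n₂) ℂ | Mᴴ = -M ∧ M.trace = 0} :=
  stmt12_general n₁ n₂ h₃ j m
end
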